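/- Solvability of the linearized problem under coercivity: Under the standing assumptions, let V ∈ L^∞(Ω,ν) and suppose there exists λ₁ > 0 such that λ₁ ∫_Ω v² dν ≤ (1/2)∫_{Ω_m}∫_{Ω_m}|∇v(x,y)|² dm_x(y)dν(x) − ∫_Ω V(x) v(x)² dν(x) for every v ∈ L²_0(Ω_m,ν). Then for every φ ∈ L²(Ω,ν) there exists u ∈ L²_0(Ω_m,ν) with −Δ_m u(x) − V(x) u(x) = φ(x) for ν-a.e. x ∈ Ω. (In the paper, V = λ f'(u_λ) with u_λ the minimal bounded solution of (P(λf)).) -/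

import Mathlib

open MeasureTheory Set

/-- The `m`-boundary of a set `Ω`. -/
def mBoundary {X : Type*} [MeasurableSpace X] (m : X → MeasureTheory.Measure X)
    (Ω : Set X) : Set X :=
  {x | x ∉ Ω ∧ 0 < m x Ω}

/-- The `m`-closure of a set `Ω`. -/
def mClosure {X : Type*} [MeasurableSpace X] (m : X → MeasureTheory.Measure X)
    (Ω : Set X) : Set X :=
  Ω ∪ mBoundary m Ω

/-- The nonlocal `m`-Laplacian. -/
noncomputable def deltaM {X : Type*} [MeasurableSpace X] (m : X → MeasureTheory.Measure X)
    (u : X → ℝ) (x : X) : ℝ :=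
  ∫ y, (u y - u x) ∂(m x)

/-- `m` is a random walk: each `m x` is a probability measure and `x ↦ m x A` is measurable. -/
def IsRandomWalk {X : Type*} [MeasurableSpace X] (m : X → MeasureTheory.Measure X) : Prop :=
  (∀ x, IsProbabilityMeasure (m x)) ∧
    ∀ A : Set X, MeasurableSet A → Measurable fun x => m x A

/-- `ν` is reversible with respect to the random walk `m`. -/
def Reversible {X : Type*} [MeasurableSpace X] (m : X → MeasureTheory.Measure X)
    (ν : MeasureTheory.Measure X) : Prop :=
  ∀ F : X → X → ℝ, Measurable (Function.uncurry F) → (∃ C, ∀ x y, |F x y| ≤ C) →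
    ∫ x, (∫ y, F x y ∂(m x)) ∂ν = ∫ x, (∫ y, F y x ∂(m x)) ∂ν

/-- `Ω` is `m`-connected with respect to `ν`. -/
def mConnected {X : Type*} [MeasurableSpace X] (m : X → MeasureTheory.Measure X)
    (ν : MeasureTheory.Measure X) (Ω : Set X) : Prop :=
  ∀ A B : Set X, MeasurableSet A → MeasurableSet B → A ⊆ Ω → B ⊆ Ω → A ∪ B = Ω →
    ν A ≠ 0 → ν B ≠ 0 → 0 < ∫ x in A, (m x B).toReal ∂ν

/-- Membership in `L²₀(Ω_m, ν)`: square integrable on `Ω_m`, vanishing `ν`-a.e. on the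
`m`-boundary, extended by `0` outside `Ω_m`. -/
def MemL20 {X : Type*} [MeasurableSpace X] (m : X → MeasureTheory.Measure X)
    (ν : MeasureTheory.Measure X) (Ω : Set X) (u : X → ℝ) : Prop :=
  Measurable u ∧ MeasureTheory.MemLp u 2 (ν.restrict (mClosure m Ω)) ∧
    (∀ᵐ x ∂(ν.restrict (mBoundary m Ω)), u x = 0) ∧ ∀ x ∉ mClosure m Ω, u x = 0

/-- The nonlocal Dirichlet energy `(1/2)∬_{Ω_m×Ω_m} |u(y)-u(x)|² dm_x(y) dν(x)`. -/
noncomputable def gradEnergy {X : Type*} [MeasurableSpace X] (m : X → MeasureTheory.Measure X)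
    (ν : MeasureTheory.Measure X) (Ω : Set X) (u : X → ℝ) : ℝ :=
  (1 / 2) * ∫ x in mClosure m Ω, (∫ y in mClosure m Ω, (u y - u x) ^ 2 ∂(m x)) ∂ν

/-- The standing assumptions of the paper: reversible random walk space, `Ω` `m`-connected with
`0 < ν(Ω) < ν(Ω_m) < ∞`, a 2-Poincaré inequality with first eigenvalue `lam = λ_m(Ω)` attained
by an eigenfunction `φ` with `0 < α ≤ φ ≤ M` a.e. on `Ω` and `φ = 0` on `∂_mΩ`. -/
structure Standing {X : Type*} [MeasurableSpace X] (m : X → MeasureTheory.Measure X)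
    (ν : MeasureTheory.Measure X) (Ω : Set X) (lam : ℝ) (φ : X → ℝ) (α M : ℝ) : Prop where
  hrw : IsRandomWalk m
  hrev : Reversible m ν
  hsigma : MeasureTheory.SigmaFinite ν
  hmeasΩ : MeasurableSet Ω
  hconn : mConnected m ν Ω
  hpos : 0 < ν Ω
  hlt : ν Ω < ν (mClosure m Ω)
  hfin : ν (mClosure m Ω) < ⊤
  hlamPos : 0 < lam
  hpoincare : ∀ u : X → ℝ, MemL20 m ν Ω u →
    lam * ∫ x in Ω, u x ^ 2 ∂ν ≤ gradEnergy m ν Ω u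
  hphiMem : MemL20 m ν Ω φ
  heig : ∀ᵐ x ∂(ν.restrict Ω), -(deltaM m φ x) = lam * φ x
  halphaPos : 0 < α
  halphaM : α ≤ M
  hphiLB : ∀ᵐ x ∂(ν.restrict Ω), α ≤ φ x
  hphiUB : ∀ᵐ x ∂(ν.restrict Ω), φ x ≤ M

/-- Essential boundedness on a set `S` with respect to `ν`. -/
def IsBdd {X : Type*} [MeasurableSpace X] (ν : MeasureTheory.Measure X) (S : Set X)
    (u : X → ℝ) : Prop :=
  ∃ C : ℝ, ∀ᵐ x ∂(ν.restrict S), |u x| ≤ C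

/-- A (nonnegative) solution of the Gelfand-type problem `(P(λ f))`. -/
def IsSol {X : Type*} [MeasurableSpace X] (m : X → MeasureTheory.Measure X)
    (ν : MeasureTheory.Measure X) (Ω : Set X) (lam : ℝ) (f : ℝ → ℝ) (u : X → ℝ) : Prop :=
  MemL20 m ν Ω u ∧ (∀ᵐ x ∂(ν.restrict (mClosure m Ω)), 0 ≤ u x) ∧
    ∀ᵐ x ∂(ν.restrict Ω), -(deltaM m u x) = lam * f (u x)

/-- A solution of `(P(λ f))` without a sign constraint. -/
def IsSolNS {X : Type*} [MeasurableSpace X] (m : X → MeasureTheory.Measure X)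
    (ν : MeasureTheory.Measure X) (Ω : Set X) (lam : ℝ) (f : ℝ → ℝ) (u : X → ℝ) : Prop :=
  MemL20 m ν Ω u ∧ ∀ᵐ x ∂(ν.restrict Ω), -(deltaM m u x) = lam * f (u x)

/-- A minimal solution of `(P(λ f))`. -/
def IsMinimalSol {X : Type*} [MeasurableSpace X] (m : X → MeasureTheory.Measure X)
    (ν : MeasureTheory.Measure X) (Ω : Set X) (lam : ℝ) (f : ℝ → ℝ) (u : X → ℝ) : Prop :=
  IsSol m ν Ω lam f u ∧
    ∀ v : X → ℝ, IsSol m ν Ω lam f v → ∀ᵐ x ∂(ν.restrict (mClosure m Ω)), u x ≤ v x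

/-- The extremal parameter `λ*`. -/
noncomputable def lamStar {X : Type*} [MeasurableSpace X] (m : X → MeasureTheory.Measure X)
    (ν : MeasureTheory.Measure X) (Ω : Set X) (f : ℝ → ℝ) : ℝ :=
  sSup {lam : ℝ | 0 ≤ lam ∧ ∃ u : X → ℝ, IsSol m ν Ω lam f u ∧ IsBdd ν (mClosure m Ω) u}

/-- Hypotheses (H) on the nonlinearity `f` with constant `c₁`. -/
def HypH (f : ℝ → ℝ) (c₁ : ℝ) : Prop :=
  ContinuousOn f (Set.Ici 0) ∧ MonotoneOn f (Set.Ici 0) ∧ 0 < f 0 ∧ 0 < c₁ ∧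
    ∀ s : ℝ, 0 ≤ s → c₁ * s ≤ f s

/-- The stability quadratic form `Q_u(v)` with linearized potential `fp ∘ u` (where `fp = f'`). -/
noncomputable def Qform {X : Type*} [MeasurableSpace X] (m : X → MeasureTheory.Measure X)
    (ν : MeasureTheory.Measure X) (Ω : Set X) (lam : ℝ) (fp : ℝ → ℝ) (u v : X → ℝ) : ℝ :=
  gradEnergy m ν Ω v - lam * ∫ x in Ω, fp (u x) * v x ^ 2 ∂ν

/-- Stability of a solution: `Q_u(v) ≥ 0` for all test functions `v ∈ L^∞ ∩ L²₀`. -/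
def IsStable {X : Type*} [MeasurableSpace X] (m : X → MeasureTheory.Measure X)
    (ν : MeasureTheory.Measure X) (Ω : Set X) (lam : ℝ) (fp : ℝ → ℝ) (u : X → ℝ) : Prop :=
  ∀ v : X → ℝ, MemL20 m ν Ω v → IsBdd ν (mClosure m Ω) v → 0 ≤ Qform m ν Ω lam fp u v

/-- The first eigenvalue `μ₁(u)` of the linearized operator, as an infimum of `Q_u` over
normalized test functions. -/
noncomputable def mu1 {X : Type*} [MeasurableSpace X] (m : X → MeasureTheory.Measure X)
    (ν : MeasureTheory.Measure X) (Ω : Set X) (lam : ℝ) (fp : ℝ → ℝ) (u : X → ℝ) : ℝ :=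
  sInf {r : ℝ | ∃ v : X → ℝ, MemL20 m ν Ω v ∧ (∫ x in Ω, v x ^ 2 ∂ν) = 1 ∧
    r = Qform m ν Ω lam fp u v}

/-!
Reversibility makes `ν` invariant for the walk, viewed as a Markov kernel `κ`. Invariance and
Jensen's inequality make `κ` a contraction of `L²(ν)`, and give the Dirichlet-form identity
`½ ∬ (f y - f x)² dκ_x dν = ∫ f² dν - ∫ f · κ f dν`. Hence on `L²(Ω, ν)`, functions being extended
by zero outside `Ω`, the operator `L u = u - κ u - V u` is bounded, and the coercivity hypothesis
reads `⟪L u, u⟫ ≥ λ₁ ‖u‖²`. By Lax–Milgram `L` is onto, and `L u = φ` is the equation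
`-Δ_m u - V u = φ` on `Ω`.
-/

open MeasureTheory Set ProbabilityTheory Filter Topology
open scoped ENNReal RealInnerProductSpace

theorem ContinuousLinearMap.surjective_of_coercive {V : Type*} [NormedAddCommGroup V]
    [InnerProductSpace ℝ V] [CompleteSpace V] (A : V →L[ℝ] V) {c : ℝ} (hc : 0 < c) (hA : ∀ u, c * ‖u‖ ^ 2 ≤ ⟪A u, u⟫) :
    Function.Surjective A := by
  set B : V →L[ℝ] V →L[ℝ] ℝ := (innerSL ℝ).comp A
  have hB : IsCoercive B := ⟨c, hc, fun u => by simpa [B, sq, mul_assoc] using hA u⟩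
  have hBA : InnerProductSpace.continuousLinearMapOfBilin B = A := by
    ext1 v
    refine ext_inner_right ℝ fun w => ?_
    rw [InnerProductSpace.continuousLinearMapOfBilin_apply]
    rfl
  have hrange := hB.range_eq_top
  rw [hBA] at hrange
  exact LinearMap.range_eq_top.1 hrange

namespace ProbabilityTheory.Kernel.Invariant

variable {X : Type*} [MeasurableSpace X] {κ : Kernel X X} {ν : Measure X} {f g : X → ℝ}

theorem ae_ae_of_ae (hκ : κ.Invariant ν) {p : X → Prop} (h : ∀ᵐ y ∂ν, p y) :
    ∀ᵐ x ∂ν, ∀ᵐ y ∂κ x, p y :=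
  Measure.ae_ae_of_ae_bind κ.aemeasurable (by rwa [hκ.def])

theorem ae_integrable (hκ : κ.Invariant ν) (hg : Integrable g ν) :
    ∀ᵐ x ∂ν, Integrable g (κ x) :=
  Measure.ae_integrable_of_integrable_comp (by rwa [← hκ.def] at hg)

theorem lintegral_lintegral (hκ : κ.Invariant ν) {F : X → ℝ≥0∞} (hF : AEMeasurable F ν) :
    ∫⁻ x, ∫⁻ y, F y ∂κ x ∂ν = ∫⁻ y, F y ∂ν := by
  rw [← Measure.lintegral_bind κ.aemeasurable (by rwa [hκ.def]), hκ.def]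

theorem integral_congr_ae (hκ : κ.Invariant ν) (h : f =ᵐ[ν] g) :
    (fun x => ∫ y, f y ∂κ x) =ᵐ[ν] fun x => ∫ y, g y ∂κ x :=
  (hκ.ae_ae_of_ae h).mono fun _ hx => MeasureTheory.integral_congr_ae hx

theorem ae_memLp (hκ : κ.Invariant ν) (hf : Measurable f) (hf2 : MemLp f 2 ν) :
    ∀ᵐ x ∂ν, MemLp f 2 (κ x) := by
  filter_upwards [hκ.ae_integrable ((memLp_two_iff_integrable_sq hf2.1).1 hf2)] with x hx
  exact (memLp_two_iff_integrable_sq hf.aestronglyMeasurable).2 hx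

variable [IsMarkovKernel κ]

theorem integral_add_ae (hκ : κ.Invariant ν) (hf : Measurable f) (hf2 : MemLp f 2 ν)
    (hg : Measurable g) (hg2 : MemLp g 2 ν) :
    (fun x => ∫ y, (f y + g y) ∂κ x) =ᵐ[ν] fun x => ∫ y, f y ∂κ x + ∫ y, g y ∂κ x := by
  filter_upwards [hκ.ae_memLp hf hf2, hκ.ae_memLp hg hg2] with x hfx hgx
  exact integral_add (hfx.integrable one_le_two) (hgx.integrable one_le_two)

theorem eLpNorm_integral_le (hκ : κ.Invariant ν) (hf : Measurable f) :
    eLpNorm (fun x => ∫ y, f y ∂κ x) 2 ν ≤ eLpNorm f 2 ν := by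
  have hpow := fun (μ : Measure X) (g : X → ℝ) =>
    eLpNorm_nnreal_pow_eq_lintegral (ε := ℝ) (μ := μ) (f := g) (p := 2) two_ne_zero
  simp only [ENNReal.coe_ofNat, NNReal.coe_ofNat] at hpow
  rw [← ENNReal.rpow_le_rpow_iff two_pos, hpow, hpow,
    ← hκ.lintegral_lintegral (hf.enorm.pow_const _).aemeasurable]
  refine lintegral_mono fun x => ?_
  rw [← hpow]
  gcongr
  calc ‖∫ y, f y ∂κ x‖ₑ ≤ eLpNorm f 1 (κ x) :=
        (enorm_integral_le_lintegral_enorm f).trans_eq eLpNorm_one_eq_lintegral_enorm.symm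
    _ ≤ eLpNorm f 2 (κ x) := eLpNorm_le_eLpNorm_of_exponent_le one_le_two hf.aestronglyMeasurable

theorem memLp_integral (hκ : κ.Invariant ν) (hf : Measurable f) (hf2 : MemLp f 2 ν) :
    MemLp (fun x => ∫ y, f y ∂κ x) 2 ν :=
  ⟨hf.stronglyMeasurable.integral_kernel.aestronglyMeasurable,
    (hκ.eLpNorm_integral_le hf).trans_lt hf2.2⟩

theorem ae_integral_sub_sq_eq (hκ : κ.Invariant ν) (hf : Measurable f) (hf2 : MemLp f 2 ν) :
    (fun x => ∫ y, (f y - f x) ^ 2 ∂κ x)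
      =ᵐ[ν] fun x => ∫ y, f y ^ 2 ∂κ x - 2 * (f x * ∫ y, f y ∂κ x) + f x ^ 2 := by
  filter_upwards [hκ.ae_memLp hf hf2] with x hx
  have hsq : Integrable (fun y => f y ^ 2 - 2 * f x * f y) (κ x) :=
    hx.integrable_sq.sub ((hx.integrable one_le_two).const_mul _)
  calc ∫ y, (f y - f x) ^ 2 ∂κ x = ∫ y, (f y ^ 2 - 2 * f x * f y + f x ^ 2) ∂κ x := by
        congr with y; ring
    _ = _ := by
        rw [integral_add hsq (integrable_const _), integral_sub hx.integrable_sq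
          ((hx.integrable one_le_two).const_mul _), integral_const_mul,
          MeasureTheory.integral_const]
        simp [mul_assoc]

variable [SFinite ν]

theorem measurePreserving_snd (hκ : κ.Invariant ν) : MeasurePreserving Prod.snd (ν ⊗ₘ κ) ν :=
  ⟨measurable_snd, by rw [← Measure.snd, Measure.snd_compProd]; exact hκ⟩

theorem integrable_integral (hκ : κ.Invariant ν) (hg : Integrable g ν) :
    Integrable (fun x => ∫ y, g y ∂κ x) ν :=
  (hκ.measurePreserving_snd.integrable_comp_of_integrable hg).integral_compProd

theorem integral_integral (hκ : κ.Invariant ν) (hg : Integrable g ν) :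
    ∫ x, ∫ y, g y ∂κ x ∂ν = ∫ y, g y ∂ν := by
  have hρ := hκ.measurePreserving_snd
  rw [← Measure.integral_compProd (f := fun z => g z.2) (hρ.integrable_comp_of_integrable hg),
    ← integral_map measurable_snd.aemeasurable (by rw [hρ.map_eq]; exact hg.1), hρ.map_eq]

theorem integrable_integral_sub_sq (hκ : κ.Invariant ν) (hf : Measurable f) (hf2 : MemLp f 2 ν) :
    Integrable (fun x => ∫ y, (f y - f x) ^ 2 ∂κ x) ν := by
  refine Integrable.congr ?_ (hκ.ae_integral_sub_sq_eq hf hf2).symm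
  exact ((hκ.integrable_integral hf2.integrable_sq).sub
    ((hf2.integrable_mul (hκ.memLp_integral hf hf2)).const_mul 2)).add hf2.integrable_sq

theorem integral_integral_sub_sq (hκ : κ.Invariant ν) (hf : Measurable f) (hf2 : MemLp f 2 ν) :
    ∫ x, ∫ y, (f y - f x) ^ 2 ∂κ x ∂ν
      = 2 * (∫ x, f x ^ 2 ∂ν - ∫ x, f x * ∫ y, f y ∂κ x ∂ν) := by
  have hfPf : Integrable (fun x => 2 * (f x * ∫ y, f y ∂κ x)) ν :=
    (hf2.integrable_mul (hκ.memLp_integral hf hf2)).const_mul 2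
  have hP : Integrable (fun x => ∫ y, f y ^ 2 ∂κ x) ν := hκ.integrable_integral hf2.integrable_sq
  have hdiff : Integrable (fun x => ∫ y, f y ^ 2 ∂κ x - 2 * (f x * ∫ y, f y ∂κ x)) ν :=
    hP.sub hfPf
  rw [MeasureTheory.integral_congr_ae (hκ.ae_integral_sub_sq_eq hf hf2),
    integral_add hdiff hf2.integrable_sq, integral_sub hP hfPf,
    integral_const_mul, hκ.integral_integral hf2.integrable_sq]
  ring

theorem setIntegral_setIntegral_sub_sq_le (hκ : κ.Invariant ν) (hf : Measurable f)
    (hf2 : MemLp f 2 ν) (T : Set X) :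
    ∫ x in T, ∫ y in T, (f y - f x) ^ 2 ∂κ x ∂ν ≤ ∫ x, ∫ y, (f y - f x) ^ 2 ∂κ x ∂ν := by
  have hint := hκ.integrable_integral_sub_sq hf hf2
  calc ∫ x in T, ∫ y in T, (f y - f x) ^ 2 ∂κ x ∂ν
      ≤ ∫ x in T, ∫ y, (f y - f x) ^ 2 ∂κ x ∂ν := by
        refine integral_mono_of_nonneg (ae_of_all _ fun x => integral_nonneg fun y => sq_nonneg _)
          hint.integrableOn (ae_restrict_of_ae ?_)
        filter_upwards [hκ.ae_memLp hf hf2] with x hx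
        exact setIntegral_le_integral (hx.sub (memLp_const _)).integrable_sq
          (ae_of_all _ fun y => sq_nonneg _)
    _ ≤ ∫ x, ∫ y, (f y - f x) ^ 2 ∂κ x ∂ν :=
        setIntegral_le_integral hint (ae_of_all _ fun x => integral_nonneg fun y => sq_nonneg _)

end ProbabilityTheory.Kernel.Invariant

section RandomWalk

variable {X : Type*} [MeasurableSpace X] {m : X → Measure X} {ν : Measure X}

noncomputable def IsRandomWalk.kernel (hrw : IsRandomWalk m) : Kernel X X :=
  ⟨m, Measure.measurable_of_measurable_coe m hrw.2⟩

@[simp]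
theorem IsRandomWalk.kernel_apply (hrw : IsRandomWalk m) (x : X) : hrw.kernel x = m x :=
  rfl

instance IsRandomWalk.isMarkovKernel (hrw : IsRandomWalk m) : IsMarkovKernel hrw.kernel :=
  ⟨hrw.1⟩

theorem Reversible.setLIntegral_comm (hrw : IsRandomWalk m) (hrev : Reversible m ν)
    {A B : Set X} (hA : MeasurableSet A) (hB : MeasurableSet B) (hνA : ν A ≠ ∞)
    (hνB : ν B ≠ ∞) : ∫⁻ x in A, m x B ∂ν = ∫⁻ x in B, m x A ∂ν := by
  have := hrw.1
  have flow : ∀ {S T : Set X}, MeasurableSet S → MeasurableSet T → ν S ≠ ∞ →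
      ∫ x, ∫ y, S.indicator 1 x * T.indicator 1 y ∂m x ∂ν = (∫⁻ x in S, m x T ∂ν).toReal := by
    intro S T hS hT hνS
    have hind :
        (fun x => S.indicator 1 x * (m x).real T) = S.indicator fun x => (m x T).toReal := by
      ext x
      by_cases hx : x ∈ S <;> simp [hx, Measure.real]
    simp_rw [integral_const_mul, integral_indicator_one hT, hind, integral_indicator hS]
    exact integral_toReal (hrw.2 T hT).aemeasurable (ae_of_all _ fun x => measure_lt_top _ _)
  have key := hrev (fun x y => A.indicator 1 x * B.indicator 1 y)
    (((measurable_const.indicator hA).comp measurable_fst).mul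
      ((measurable_const.indicator hB).comp measurable_snd))
    ⟨1, fun x y => by
      simp only [abs_mul]
      exact mul_le_one₀ (by by_cases x ∈ A <;> simp [*]) (abs_nonneg _)
        (by by_cases y ∈ B <;> simp [*])⟩
  rw [flow hA hB hνA] at key
  simp_rw [mul_comm (A.indicator 1 _)] at key
  rw [flow hB hA hνB] at key
  have fin : ∀ {S : Set X} (T : Set X), ν S ≠ ∞ → ∫⁻ x in S, m x T ∂ν ≠ ∞ := fun T hνS =>
    ne_top_of_le_ne_top (by simpa using hνS) (lintegral_mono fun x => prob_le_one)
  exact (ENNReal.toReal_eq_toReal_iff' (fin B hνA) (fin A hνB)).1 key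

/-- `Reversible` speaks of Bochner integrals, which carry information only on sets of finite
measure; the general case follows by exhausting `X` with the spanning sets of `ν`. -/
theorem Reversible.isReversible [SigmaFinite ν] (hrw : IsRandomWalk m) (hrev : Reversible m ν) :
    hrw.kernel.IsReversible ν := by
  intro A B hA hB
  have hS := measurableSet_spanningSets ν
  have hSmono : ∀ C : Set X, Monotone fun n => C ∩ spanningSets ν n :=
    fun C _ _ hij => inter_subset_inter_right _ (monotone_spanningSets ν hij)
  have flux : ∀ {C D : Set X}, MeasurableSet C → MeasurableSet D →
      Tendsto (fun n => ∫⁻ x in C ∩ spanningSets ν n, m x (D ∩ spanningSets ν n) ∂ν) atTop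
        (𝓝 (∫⁻ x in C, m x D ∂ν)) := by
    intro C D hC hD
    have hlim := tendsto_measure_iUnion_atTop (μ := ν ⊗ₘ hrw.kernel)
      fun _ _ hij => prod_mono (hSmono C hij) (hSmono D hij)
    rw [iUnion_prod_of_monotone (hSmono C) (hSmono D),
      ← inter_iUnion, ← inter_iUnion, iUnion_spanningSets, inter_univ, inter_univ,
      Measure.compProd_apply_prod hC hD] at hlim
    simpa [Function.comp_def, Measure.compProd_apply_prod (hC.inter (hS _)) (hD.inter (hS _))]
      using hlim
  have hfin : ∀ {C : Set X} n, ν (C ∩ spanningSets ν n) ≠ ∞ := fun n =>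
    ((measure_mono inter_subset_right).trans_lt (measure_spanningSets_lt_top ν n)).ne
  simp only [IsRandomWalk.kernel_apply]
  refine tendsto_nhds_unique (flux hA hB) ?_
  simp_rw [fun n =>
    hrev.setLIntegral_comm hrw (hA.inter (hS n)) (hB.inter (hS n)) (hfin n) (hfin n)]
  exact flux hB hA

end RandomWalk

namespace MeasureTheory.Lp

variable {X : Type*} [MeasurableSpace X] {ν : Measure X} {Ω : Set X}

theorem measurable_indicator_coeFn (hΩ : MeasurableSet Ω) (h : Lp ℝ 2 (ν.restrict Ω)) :
    Measurable (Ω.indicator h) :=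
  (Lp.stronglyMeasurable h).measurable.indicator hΩ

theorem memLp_indicator_coeFn (hΩ : MeasurableSet Ω) (h : Lp ℝ 2 (ν.restrict Ω)) :
    MemLp (Ω.indicator h) 2 ν :=
  (memLp_indicator_iff_restrict hΩ).2 (Lp.memLp h)

end MeasureTheory.Lp

namespace ProbabilityTheory.Kernel.Invariant

variable {X : Type*} [MeasurableSpace X] {κ : Kernel X X} [IsMarkovKernel κ] {ν : Measure X}
  {Ω : Set X} {V : X → ℝ}

theorem memLp_integral_indicator (hκ : κ.Invariant ν) (hΩ : MeasurableSet Ω)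
    (h : Lp ℝ 2 (ν.restrict Ω)) : MemLp (fun x => ∫ y, Ω.indicator h y ∂κ x) 2 (ν.restrict Ω) :=
  (hκ.memLp_integral (Lp.measurable_indicator_coeFn hΩ h)
    (Lp.memLp_indicator_coeFn hΩ h)).restrict Ω

/-- The Markov operator of `κ` on `L²(Ω, ν)` under the Dirichlet condition: functions are
extended by `0` outside `Ω`. -/
noncomputable def dirichletOp (hκ : κ.Invariant ν) (hΩ : MeasurableSet Ω) :
    Lp ℝ 2 (ν.restrict Ω) →L[ℝ] Lp ℝ 2 (ν.restrict Ω) :=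
  LinearMap.mkContinuous
    { toFun h := (hκ.memLp_integral_indicator hΩ h).toLp
      map_add' h g := by
        rw [← MemLp.toLp_add]
        refine MemLp.toLp_congr _ _ (ae_restrict_of_ae ?_)
        have hsum := (ae_eq_restrict_iff_indicator_ae_eq hΩ).1 (Lp.coeFn_add h g)
        rw [indicator_add'] at hsum
        exact (hκ.integral_congr_ae hsum).trans (hκ.integral_add_ae
          (Lp.measurable_indicator_coeFn hΩ h) (Lp.memLp_indicator_coeFn hΩ h)
          (Lp.measurable_indicator_coeFn hΩ g) (Lp.memLp_indicator_coeFn hΩ g))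
      map_smul' c h := by
        rw [← MemLp.toLp_const_smul]
        refine MemLp.toLp_congr _ _ (ae_restrict_of_ae ?_)
        have hsmul := (ae_eq_restrict_iff_indicator_ae_eq hΩ).1 (Lp.coeFn_smul c h)
        filter_upwards [hκ.integral_congr_ae hsmul] with x hx
        rw [hx, RingHom.id_apply, Pi.smul_apply, ← integral_smul]
        congr with y
        exact indicator_const_smul_apply Ω c _ y }
    1 fun h => by
      rw [one_mul, LinearMap.coe_mk, AddHom.coe_mk, Lp.norm_toLp, Lp.norm_def,
        ← eLpNorm_indicator_eq_eLpNorm_restrict (f := ⇑h) hΩ]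
      exact ENNReal.toReal_mono (Lp.memLp_indicator_coeFn hΩ h).2.ne
        ((eLpNorm_mono_measure _ Measure.restrict_le_self).trans
          (hκ.eLpNorm_integral_le (Lp.measurable_indicator_coeFn hΩ h)))

theorem coeFn_dirichletOp (hκ : κ.Invariant ν) (hΩ : MeasurableSet Ω)
    (h : Lp ℝ 2 (ν.restrict Ω)) :
    hκ.dirichletOp hΩ h =ᵐ[ν.restrict Ω] fun x => ∫ y, Ω.indicator h y ∂κ x :=
  MemLp.coeFn_toLp (hκ.memLp_integral_indicator hΩ h)

/-- `-Δ_m - V` on `L²(Ω, ν)`: `u ↦ u - κ u - V u`. -/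
noncomputable def linearizedOp (hκ : κ.Invariant ν) (hΩ : MeasurableSet Ω)
    (hV : MemLp V ∞ (ν.restrict Ω)) : Lp ℝ 2 (ν.restrict Ω) →L[ℝ] Lp ℝ 2 (ν.restrict Ω) :=
  1 - hκ.dirichletOp hΩ - (ContinuousLinearMap.mul ℝ ℝ).holderL (ν.restrict Ω) ∞ 2 2 (hV.toLp V)

theorem coeFn_linearizedOp (hκ : κ.Invariant ν) (hΩ : MeasurableSet Ω)
    (hV : MemLp V ∞ (ν.restrict Ω)) (h : Lp ℝ 2 (ν.restrict Ω)) :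
    hκ.linearizedOp hΩ hV h =ᵐ[ν.restrict Ω]
      fun x => Ω.indicator h x - ∫ y, Ω.indicator h y ∂κ x - V x * Ω.indicator h x := by
  set M := (ContinuousLinearMap.mul ℝ ℝ).holder 2 (hV.toLp V) h
  have hL : hκ.linearizedOp hΩ hV h = h - hκ.dirichletOp hΩ h - M := rfl
  rw [hL]
  filter_upwards [Lp.coeFn_sub (h - hκ.dirichletOp hΩ h) M, Lp.coeFn_sub h (hκ.dirichletOp hΩ h),
    hκ.coeFn_dirichletOp hΩ h, (ContinuousLinearMap.mul ℝ ℝ).coeFn_holder (r := 2) (hV.toLp V) h,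
    hV.coeFn_toLp, ae_restrict_mem hΩ] with x h₁ h₂ h₃ h₄ h₅ hx
  rw [h₁, Pi.sub_apply, h₂, Pi.sub_apply, h₃, h₄, h₅, ContinuousLinearMap.mul_apply',
    indicator_of_mem hx]

theorem inner_linearizedOp_self (hκ : κ.Invariant ν) (hΩ : MeasurableSet Ω)
    (hV : MemLp V ∞ (ν.restrict Ω)) (h : Lp ℝ 2 (ν.restrict Ω)) :
    ⟪hκ.linearizedOp hΩ hV h, h⟫ = ∫ x in Ω, Ω.indicator h x ^ 2 ∂ν
      - ∫ x in Ω, Ω.indicator h x * ∫ y, Ω.indicator h y ∂κ x ∂ν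
      - ∫ x in Ω, V x * Ω.indicator h x ^ 2 ∂ν := by
  have inner_eq : ∀ (g : Lp ℝ 2 (ν.restrict Ω)) (G : X → ℝ), g =ᵐ[ν.restrict Ω] G →
      ⟪g, h⟫ = ∫ x in Ω, G x * Ω.indicator h x ∂ν := fun g G hg => by
    rw [L2.inner_def]
    refine MeasureTheory.integral_congr_ae ?_
    filter_upwards [hg, ae_restrict_mem hΩ] with x hx hxΩ
    rw [hx, indicator_of_mem hxΩ, RCLike.inner_apply, conj_trivial, mul_comm]
  have hM : (ContinuousLinearMap.mul ℝ ℝ).holder 2 (hV.toLp V) h =ᵐ[ν.restrict Ω]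
      fun x => V x * Ω.indicator h x := by
    filter_upwards [(ContinuousLinearMap.mul ℝ ℝ).coeFn_holder (r := 2) (hV.toLp V) h,
      hV.coeFn_toLp, indicator_ae_eq_restrict (f := ⇑h) hΩ] with x h₁ h₂ h₃
    rw [h₁, h₂, h₃, ContinuousLinearMap.mul_apply']
  have hL : hκ.linearizedOp hΩ hV h =
      h - hκ.dirichletOp hΩ h - (ContinuousLinearMap.mul ℝ ℝ).holder 2 (hV.toLp V) h := rfl
  rw [hL, inner_sub_left, inner_sub_left, inner_eq h _ (indicator_ae_eq_restrict hΩ).symm,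
    inner_eq _ _ (hκ.coeFn_dirichletOp hΩ h), inner_eq _ _ hM]
  simp only [sq, mul_comm (Ω.indicator h _), mul_assoc]

end ProbabilityTheory.Kernel.Invariant

section RandomWalkSpace

variable {X : Type*} [MeasurableSpace X] {m : X → Measure X} {ν : Measure X} {Ω : Set X}

theorem IsRandomWalk.measurableSet_mBoundary (hrw : IsRandomWalk m) (hΩ : MeasurableSet Ω) :
    MeasurableSet (mBoundary m Ω) :=
  hΩ.compl.inter (measurableSet_lt measurable_const (hrw.2 Ω hΩ))

theorem IsRandomWalk.memL20_indicator (hrw : IsRandomWalk m) (hΩ : MeasurableSet Ω)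
    {f : X → ℝ} (hf : Measurable f) (hf2 : MemLp f 2 (ν.restrict Ω)) :
    MemL20 m ν Ω (Ω.indicator f) :=
  ⟨hf.indicator hΩ, ((memLp_indicator_iff_restrict hΩ).2 hf2).restrict _,
    ae_restrict_of_forall_mem (hrw.measurableSet_mBoundary hΩ) fun _ hx =>
      indicator_of_notMem hx.1 f,
    fun _ hx => indicator_of_notMem (fun hxΩ => hx (Or.inl hxΩ)) f⟩

theorem IsRandomWalk.deltaM_eq_integral_sub (hrw : IsRandomWalk m) {u : X → ℝ} {x : X}
    (hu : Integrable u (m x)) : deltaM m u x = ∫ y, u y ∂m x - u x := by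
  have := hrw.1 x
  rw [deltaM, integral_sub hu (integrable_const _), integral_const, probReal_univ, one_smul]

theorem IsRandomWalk.gradEnergy_le [SFinite ν] (hrw : IsRandomWalk m)
    (hκ : hrw.kernel.Invariant ν) {w : X → ℝ} (hw : Measurable w) (hw2 : MemLp w 2 ν) :
    gradEnergy m ν Ω w ≤ ∫ x, w x ^ 2 ∂ν - ∫ x, w x * ∫ y, w y ∂m x ∂ν := by
  have hle := hκ.setIntegral_setIntegral_sub_sq_le hw hw2 (mClosure m Ω)
  rw [hκ.integral_integral_sub_sq hw hw2] at hle
  rw [gradEnergy]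
  simp only [IsRandomWalk.kernel_apply] at hle
  linarith

theorem IsRandomWalk.mul_norm_sq_le_inner_linearizedOp [SFinite ν] (hrw : IsRandomWalk m)
    (hκ : hrw.kernel.Invariant ν) (hΩ : MeasurableSet Ω) {V : X → ℝ}
    (hV : MemLp V ∞ (ν.restrict Ω)) {lam₁ : ℝ}
    (hcoer : ∀ v : X → ℝ, MemL20 m ν Ω v →
      lam₁ * ∫ x in Ω, v x ^ 2 ∂ν ≤ gradEnergy m ν Ω v - ∫ x in Ω, V x * v x ^ 2 ∂ν)
    (h : Lp ℝ 2 (ν.restrict Ω)) : lam₁ * ‖h‖ ^ 2 ≤ ⟪hκ.linearizedOp hΩ hV h, h⟫ := by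
  have hnorm : ‖h‖ ^ 2 = ∫ x in Ω, Ω.indicator h x ^ 2 ∂ν := by
    rw [← real_inner_self_eq_norm_sq, L2.inner_def]
    refine integral_congr_ae ?_
    filter_upwards [indicator_ae_eq_restrict (f := ⇑h) hΩ] with x hx
    rw [hx, RCLike.inner_apply, conj_trivial, sq]
  have hvanish : ∀ g : X → ℝ, ∫ x in Ω, Ω.indicator h x * g x ∂ν = ∫ x, Ω.indicator h x * g x ∂ν :=
    fun g => setIntegral_eq_integral_of_forall_compl_eq_zero fun x hx => by
      rw [indicator_of_notMem hx, zero_mul]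
  have hcoer_h :=
    hcoer _ (hrw.memL20_indicator hΩ (Lp.stronglyMeasurable h).measurable (Lp.memLp h))
  have henergy := hrw.gradEnergy_le (Ω := Ω) hκ (Lp.measurable_indicator_coeFn hΩ h)
    (Lp.memLp_indicator_coeFn hΩ h)
  rw [hκ.inner_linearizedOp_self hΩ hV h, hnorm]
  simp only [sq, hvanish, IsRandomWalk.kernel_apply] at hcoer_h henergy ⊢
  linarith

end RandomWalkSpace

theorem linearized_problem_solvable_general
    {X : Type*} [MeasurableSpace X]
    (m : X → MeasureTheory.Measure X) (ν : MeasureTheory.Measure X)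
    [MeasureTheory.SigmaFinite ν]
    (hrw : IsRandomWalk m) (hrev : Reversible m ν)
    (Ω : Set X) (hΩ : MeasurableSet Ω)
    (V : X → ℝ) (hVmeas : Measurable V)
    (hVbdd : ∃ C, ∀ᵐ x ∂(ν.restrict Ω), |V x| ≤ C)
    (lam₁ : ℝ) (hlam₁ : 0 < lam₁)
    (hcoer : ∀ v : X → ℝ, MemL20 m ν Ω v →
      lam₁ * ∫ x in Ω, v x ^ 2 ∂ν ≤
        gradEnergy m ν Ω v - ∫ x in Ω, V x * v x ^ 2 ∂ν) :
    ∀ φ₀ : X → ℝ, Measurable φ₀ → MeasureTheory.MemLp φ₀ 2 (ν.restrict Ω) →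
      ∃ u : X → ℝ, MemL20 m ν Ω u ∧
        ∀ᵐ x ∂(ν.restrict Ω), -(deltaM m u x) - V x * u x = φ₀ x := by
  intro φ₀ _ hφ₀
  have hκ : hrw.kernel.Invariant ν := (hrev.isReversible hrw).invariant
  obtain ⟨C, hC⟩ := hVbdd
  have hV : MemLp V ∞ (ν.restrict Ω) := memLp_top_of_bound hVmeas.aestronglyMeasurable C hC
  obtain ⟨h, hh⟩ := ContinuousLinearMap.surjective_of_coercive (hκ.linearizedOp hΩ hV) hlam₁
    (hrw.mul_norm_sq_le_inner_linearizedOp hκ hΩ hV hcoer) (hφ₀.toLp φ₀)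
  have hφ := hφ₀.coeFn_toLp
  rw [← hh] at hφ
  refine ⟨Ω.indicator h,
    hrw.memL20_indicator hΩ (Lp.stronglyMeasurable h).measurable (Lp.memLp h), ?_⟩
  filter_upwards [hκ.coeFn_linearizedOp hΩ hV h, hφ, ae_restrict_of_ae (hκ.ae_memLp
    (Lp.measurable_indicator_coeFn hΩ h) (Lp.memLp_indicator_coeFn hΩ h))] with x hLx hφx hint
  rw [hrw.deltaM_eq_integral_sub (hint.integrable one_le_two), ← hφx, hLx]
  simp only [IsRandomWalk.kernel_apply]
  ring

/-- **Solvability of the linearized problem under coercivity**: if `V ∈ L^∞(Ω, ν)` and the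
quadratic form `v ↦ gradEnergy(v) − ∫_Ω V v²` is coercive on `L²₀(Ω_m, ν)` with constant
`λ₁ > 0`, then for every `φ₀ ∈ L²(Ω, ν)` there is `u ∈ L²₀(Ω_m, ν)` with
`−Δ_m u − V u = φ₀` `ν`-a.e. in `Ω`. -/
theorem linearized_problem_solvable
    {X : Type*} [MeasurableSpace X] [MeasurableSpace.CountablyGenerated X]
    (m : X → MeasureTheory.Measure X) (ν : MeasureTheory.Measure X)
    [MeasureTheory.SigmaFinite ν]
    (hrw : IsRandomWalk m) (hrev : Reversible m ν)
    (Ω : Set X) (hΩ : MeasurableSet Ω) (hconn : mConnected m ν Ω)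
    (hpos : 0 < ν Ω) (hlt : ν Ω < ν (mClosure m Ω)) (hfin : ν (mClosure m Ω) < ⊤)
    (V : X → ℝ) (hVmeas : Measurable V)
    (hVbdd : ∃ C, ∀ᵐ x ∂(ν.restrict Ω), |V x| ≤ C)
    (lam₁ : ℝ) (hlam₁ : 0 < lam₁)
    (hcoer : ∀ v : X → ℝ, MemL20 m ν Ω v →
      lam₁ * ∫ x in Ω, v x ^ 2 ∂ν ≤
        gradEnergy m ν Ω v - ∫ x in Ω, V x * v x ^ 2 ∂ν) :
    ∀ φ₀ : X → ℝ, Measurable φ₀ → MeasureTheory.MemLp φ₀ 2 (ν.restrict Ω) →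
      ∃ u : X → ℝ, MemL20 m ν Ω u ∧
        ∀ᵐ x ∂(ν.restrict Ω), -(deltaM m u x) - V x * u x = φ₀ x :=
  linearized_problem_solvable_general m ν hrw hrev Ω hΩ V hVmeas hVbdd lam₁ hlam₁ hcoer
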